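/- arXiv:2605.13025 — 2 statements merged into one kernel-verified Lean document; each statement's English description precedes it below -/
import Mathlib

section
/- Let A₁, A₂ be finite nonempty sets, let Ĝ, G* : A₁ × A₂ → ℝ, let η > 0, and let π₁ʳᵉᶠ ∈ Δ(A₁), π₂ʳᵉᶠ ∈ Δ(A₂) be strictly positive. Let (μ̂, ν̂) be a saddle point of J_Ĝ and (μ*, ν*) a saddle point of J_{G*}. Then (‖μ̂ − μ*‖₁ + ‖ν̂ − ν*‖₁)² ≤ 4η²·ξ², where ξ² = max( max_{a₁} Σ_{a₂} ν*(a₂)·(Ĝ(a₁,a₂) − G*(a₁,a₂))² , max_{a₂} Σ_{a₁} μ*(a₁)·(Ĝ(a₁,a₂) − G*(a₁,a₂))² ). -/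
/-!
Each component of a saddle point is the Gibbs best response `ρ · exp(η · payoff) / Z` to the
other component. For Gibbs distributions the symmetric KL divergence is the pairing of their
difference with the difference of the payoff vectors, so adding the symmetric divergences of
both players at the two saddle points leaves `η` times a bilinear form in `Ĝ - G*` alone.
Jensen bounds each payoff-error average by `√ξ²`, while the symmetric KL dominates the squared
`ℓ¹` distance (logarithmic mean ≤ arithmetic mean, then Cauchy–Schwarz). With `a, b` the two
`ℓ¹` distances this gives `a² + b² ≤ η √ξ² (a + b)`, hence `(a + b)² ≤ 4 η² ξ²`.
-/

open Finset

/-- The probability simplex on a finite type: nonnegative entries summing to one. -/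
def IsSimplex {A : Type*} [Fintype A] (p : A → ℝ) : Prop :=
  (∀ a, 0 ≤ p a) ∧ ∑ a, p a = 1

/-- KL divergence between two distributions on a finite type
(with the convention `0 * log 0 = 0`, which holds in Lean since `Real.log 0 = 0`). -/
noncomputable def KLdiv {A : Type*} [Fintype A] (p q : A → ℝ) : ℝ :=
  ∑ a, p a * Real.log (p a / q a)

/-- The KL-regularized zero-sum game objective
`J_G(μ, ν) = Σ_{a₁,a₂} μ(a₁) ν(a₂) G(a₁,a₂) − η⁻¹ KL(μ‖π₁ʳᵉᶠ) + η⁻¹ KL(ν‖π₂ʳᵉᶠ)`. -/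
noncomputable def J {A₁ A₂ : Type*} [Fintype A₁] [Fintype A₂]
    (G : A₁ × A₂ → ℝ) (η : ℝ) (π₁ref : A₁ → ℝ) (π₂ref : A₂ → ℝ)
    (μ : A₁ → ℝ) (ν : A₂ → ℝ) : ℝ :=
  (∑ a₁, ∑ a₂, μ a₁ * ν a₂ * G (a₁, a₂))
    - η⁻¹ * KLdiv μ π₁ref + η⁻¹ * KLdiv ν π₂ref

/-- `(μs, νs)` is a saddle point of `J_G` over the product of simplices:
`J_G(μ, νs) ≤ J_G(μs, νs) ≤ J_G(μs, ν)` for all `μ ∈ Δ(A₁)`, `ν ∈ Δ(A₂)`. -/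
def IsSaddle {A₁ A₂ : Type*} [Fintype A₁] [Fintype A₂]
    (G : A₁ × A₂ → ℝ) (η : ℝ) (π₁ref : A₁ → ℝ) (π₂ref : A₂ → ℝ)
    (μs : A₁ → ℝ) (νs : A₂ → ℝ) : Prop :=
  IsSimplex μs ∧ IsSimplex νs ∧
  (∀ μ : A₁ → ℝ, IsSimplex μ → J G η π₁ref π₂ref μ νs ≤ J G η π₁ref π₂ref μs νs) ∧
  (∀ ν : A₂ → ℝ, IsSimplex ν → J G η π₁ref π₂ref μs νs ≤ J G η π₁ref π₂ref μs ν)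

open Real InformationTheory

section KLdiv
variable {A : Type*} [Fintype A]

lemma KLdiv_self (q : A → ℝ) : KLdiv q q = 0 := by
  refine Finset.sum_eq_zero fun a _ => ?_
  rcases eq_or_ne (q a) 0 with h | h <;> simp [h]

lemma KLdiv_eq_sum_mul_klFun {p q : A → ℝ} (hq : ∀ a, 0 < q a) (hpq : ∑ a, p a = ∑ a, q a) :
    KLdiv p q = ∑ a, q a * klFun (p a / q a) := by
  have hterm : ∀ a, q a * klFun (p a / q a) = p a * log (p a / q a) + (q a - p a) := fun a => by
    rw [klFun_apply]
    field_simp [(hq a).ne']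
    ring
  simp only [hterm, Finset.sum_add_distrib, Finset.sum_sub_distrib, hpq, sub_self, add_zero,
    KLdiv]

lemma eq_of_KLdiv_nonpos {p q : A → ℝ} (hp : ∀ a, 0 ≤ p a) (hq : ∀ a, 0 < q a)
    (hpq : ∑ a, p a = ∑ a, q a) (h : KLdiv p q ≤ 0) : p = q := by
  have hnonneg : ∀ a ∈ Finset.univ, 0 ≤ q a * klFun (p a / q a) := fun a _ =>
    mul_nonneg (hq a).le (klFun_nonneg (div_nonneg (hp a) (hq a).le))
  rw [KLdiv_eq_sum_mul_klFun hq hpq] at h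
  have hzero := (Finset.sum_eq_zero_iff_of_nonneg hnonneg).1
    (le_antisymm h (Finset.sum_nonneg hnonneg))
  funext a
  have := hzero a (Finset.mem_univ a)
  rw [mul_eq_zero, klFun_eq_zero_iff (div_nonneg (hp a) (hq a).le)] at this
  rcases this with h0 | h1
  · exact absurd h0 (hq a).ne'
  · exact (div_eq_one_iff_eq (hq a).ne').1 h1

lemma KLdiv_add_KLdiv {p q : A → ℝ} (hp : ∀ a, 0 < p a) (hq : ∀ a, 0 < q a) :
    KLdiv p q + KLdiv q p = ∑ a, (p a - q a) * (log (p a) - log (q a)) := by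
  rw [KLdiv, KLdiv, ← Finset.sum_add_distrib]
  refine Finset.sum_congr rfl fun a _ => ?_
  rw [log_div (hp a).ne' (hq a).ne', log_div (hq a).ne' (hp a).ne']
  ring

lemma two_mul_sq_div_add_le_mul_log_sub {x y : ℝ} (hx : 0 < x) (hy : 0 < y) :
    2 * (x - y) ^ 2 / (x + y) ≤ (x - y) * (log x - log y) := by
  wlog hxy : y ≤ x generalizing x y
  · have := this hy hx (le_of_not_ge hxy)
    rwa [add_comm, ← neg_sub x y, neg_sq, ← neg_sub (log x), neg_mul_neg] at this
  -- the logarithmic mean `(x - y) / (log x - log y)` is at most the arithmetic mean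
  have hlog : 2 * (x - y) / (x + y) ≤ log x - log y := by
    have key := le_log_one_add_of_nonneg (div_nonneg (sub_nonneg.2 hxy) hy.le)
    rwa [← log_div hx.ne' hy.ne', ← show 1 + (x - y) / y = x / y by field_simp; ring,
      ← show 2 * ((x - y) / y) / ((x - y) / y + 2) = 2 * (x - y) / (x + y) by
        rw [div_add' _ _ _ hy.ne', mul_div_assoc, div_div_div_cancel_right₀ hy.ne',
          ← mul_div_assoc]
        ring]
  calc 2 * (x - y) ^ 2 / (x + y) = (x - y) * (2 * (x - y) / (x + y)) := by ring
    _ ≤ (x - y) * (log x - log y) := mul_le_mul_of_nonneg_left hlog (sub_nonneg.2 hxy)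

lemma sq_sum_abs_sub_le_KLdiv_add_KLdiv {p q : A → ℝ} (hp : ∀ a, 0 < p a) (hq : ∀ a, 0 < q a)
    (hp1 : ∑ a, p a = 1) (hq1 : ∑ a, q a = 1) :
    (∑ a, |p a - q a|) ^ 2 ≤ KLdiv p q + KLdiv q p := by
  have hpq : ∀ a ∈ Finset.univ, 0 < p a + q a := fun a _ => add_pos (hp a) (hq a)
  have hcs := Finset.sq_sum_div_le_sum_sq_div Finset.univ (fun a => |p a - q a|) hpq
  rw [Finset.sum_add_distrib, hp1, hq1] at hcs
  simp only [sq_abs] at hcs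
  calc (∑ a, |p a - q a|) ^ 2 ≤ ∑ a, 2 * (p a - q a) ^ 2 / (p a + q a) := by
        simp only [mul_div_assoc, ← Finset.mul_sum]
        linarith
    _ ≤ KLdiv p q + KLdiv q p := by
        rw [KLdiv_add_KLdiv hp hq]
        exact Finset.sum_le_sum fun a _ => two_mul_sq_div_add_le_mul_log_sub (hp a) (hq a)

end KLdiv

section Gibbs
variable {A : Type*} [Fintype A] {ρ : A → ℝ}

noncomputable def partitionFn (ρ c : A → ℝ) : ℝ := ∑ a, ρ a * exp (c a)

noncomputable def gibbs (ρ c : A → ℝ) (a : A) : ℝ := ρ a * exp (c a) / partitionFn ρ c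

noncomputable def regPayoff (ρ c μ : A → ℝ) : ℝ := ∑ a, μ a * c a - KLdiv μ ρ

variable [Nonempty A]

lemma partitionFn_pos (hρ : ∀ a, 0 < ρ a) (c : A → ℝ) : 0 < partitionFn ρ c :=
  Finset.sum_pos (fun a _ => mul_pos (hρ a) (exp_pos _)) Finset.univ_nonempty

lemma gibbs_pos (hρ : ∀ a, 0 < ρ a) (c : A → ℝ) (a : A) : 0 < gibbs ρ c a :=
  div_pos (mul_pos (hρ a) (exp_pos _)) (partitionFn_pos hρ c)

lemma sum_gibbs (hρ : ∀ a, 0 < ρ a) (c : A → ℝ) : ∑ a, gibbs ρ c a = 1 := by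
  simp only [gibbs, ← Finset.sum_div]
  exact div_self (partitionFn_pos hρ c).ne'

lemma log_gibbs (hρ : ∀ a, 0 < ρ a) (c : A → ℝ) (a : A) :
    log (gibbs ρ c a) = log (ρ a) + c a - log (partitionFn ρ c) := by
  rw [gibbs, log_div (mul_pos (hρ a) (exp_pos _)).ne' (partitionFn_pos hρ c).ne',
    log_mul (hρ a).ne' (exp_pos _).ne', log_exp]

-- Donsker–Varadhan: `regPayoff ρ c` is maximized over the simplex exactly at `gibbs ρ c`.
lemma regPayoff_eq_log_partitionFn_sub_KLdiv (hρ : ∀ a, 0 < ρ a) (c : A → ℝ) {μ : A → ℝ}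
    (hμ : IsSimplex μ) :
    regPayoff ρ c μ = log (partitionFn ρ c) - KLdiv μ (gibbs ρ c) := by
  have hterm : ∀ a, μ a * log (μ a / ρ a)
      = μ a * log (μ a / gibbs ρ c a) + μ a * c a - log (partitionFn ρ c) * μ a := fun a => by
    rcases (hμ.1 a).eq_or_lt with h0 | hpos
    · simp [← h0]
    · rw [log_div hpos.ne' (hρ a).ne', log_div hpos.ne' (gibbs_pos hρ c a).ne', log_gibbs hρ c a]
      ring
  simp only [regPayoff, KLdiv, hterm, Finset.sum_sub_distrib, Finset.sum_add_distrib,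
    ← Finset.mul_sum, hμ.2]
  ring

lemma eq_gibbs_of_forall_regPayoff_le (hρ : ∀ a, 0 < ρ a) (c : A → ℝ) {μ : A → ℝ}
    (hμ : IsSimplex μ) (hmax : ∀ μ' : A → ℝ, IsSimplex μ' → regPayoff ρ c μ' ≤ regPayoff ρ c μ) :
    μ = gibbs ρ c := by
  have hg : IsSimplex (gibbs ρ c) := ⟨fun a => (gibbs_pos hρ c a).le, sum_gibbs hρ c⟩
  have h := hmax _ hg
  rw [regPayoff_eq_log_partitionFn_sub_KLdiv hρ c hg,
    regPayoff_eq_log_partitionFn_sub_KLdiv hρ c hμ,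
    KLdiv_self, sub_zero, le_sub_self_iff] at h
  exact eq_of_KLdiv_nonpos hμ.1 (gibbs_pos hρ c) (by rw [hμ.2, sum_gibbs hρ c]) h

lemma KLdiv_add_KLdiv_gibbs (hρ : ∀ a, 0 < ρ a) (c c' : A → ℝ) :
    KLdiv (gibbs ρ c) (gibbs ρ c') + KLdiv (gibbs ρ c') (gibbs ρ c)
      = ∑ a, (gibbs ρ c a - gibbs ρ c' a) * (c a - c' a) := by
  have hsum : ∑ a, (gibbs ρ c a - gibbs ρ c' a) = 0 := by
    rw [Finset.sum_sub_distrib, sum_gibbs hρ, sum_gibbs hρ, sub_self]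
  rw [KLdiv_add_KLdiv (gibbs_pos hρ c) (gibbs_pos hρ c')]
  simp only [log_gibbs hρ]
  -- the normalizing constants drop out because `gibbs ρ c - gibbs ρ c'` sums to zero
  have hterm : ∀ a, (gibbs ρ c a - gibbs ρ c' a) *
      (log (ρ a) + c a - log (partitionFn ρ c) - (log (ρ a) + c' a - log (partitionFn ρ c')))
      = (gibbs ρ c a - gibbs ρ c' a) * (c a - c' a)
        - (gibbs ρ c a - gibbs ρ c' a) * (log (partitionFn ρ c) - log (partitionFn ρ c')) :=
    fun a => by ring
  rw [Finset.sum_congr rfl fun a _ => hterm a, Finset.sum_sub_distrib, ← Finset.sum_mul, hsum,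
    zero_mul, sub_zero]

end Gibbs

section Game
variable {A₁ A₂ : Type*} [Fintype A₁] [Fintype A₂]
  {G : A₁ × A₂ → ℝ} {η : ℝ} {ρ₁ : A₁ → ℝ} {ρ₂ : A₂ → ℝ}

lemma J_eq_regPayoff_fst (hη : η ≠ 0) (μ : A₁ → ℝ) (ν : A₂ → ℝ) :
    J G η ρ₁ ρ₂ μ ν
      = η⁻¹ * regPayoff ρ₁ (fun a₁ => η * ∑ a₂, ν a₂ * G (a₁, a₂)) μ + η⁻¹ * KLdiv ν ρ₂ := by
  have hpay : ∀ a₁, μ a₁ * (η * ∑ a₂, ν a₂ * G (a₁, a₂))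
      = η * ∑ a₂, μ a₁ * ν a₂ * G (a₁, a₂) := fun a₁ => by
    rw [Finset.mul_sum, Finset.mul_sum, Finset.mul_sum]
    exact Finset.sum_congr rfl fun a₂ _ => by ring
  simp only [J, regPayoff, hpay, ← Finset.mul_sum]
  field_simp

lemma J_eq_regPayoff_snd (hη : η ≠ 0) (μ : A₁ → ℝ) (ν : A₂ → ℝ) :
    J G η ρ₁ ρ₂ μ ν
      = -(η⁻¹ * regPayoff ρ₂ (fun a₂ => -(η * ∑ a₁, μ a₁ * G (a₁, a₂))) ν)
        - η⁻¹ * KLdiv μ ρ₁ := by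
  have hpay : ∀ a₂, ν a₂ * -(η * ∑ a₁, μ a₁ * G (a₁, a₂))
      = -(η * ∑ a₁, μ a₁ * ν a₂ * G (a₁, a₂)) := fun a₂ => by
    rw [mul_neg, neg_inj, Finset.mul_sum, Finset.mul_sum, Finset.mul_sum]
    exact Finset.sum_congr rfl fun a₁ _ => by ring
  simp only [J, regPayoff, hpay, Finset.sum_neg_distrib, ← Finset.mul_sum]
  rw [Finset.sum_comm]
  field_simp
  ring

variable {μ : A₁ → ℝ} {ν : A₂ → ℝ}

lemma IsSaddle.fst_eq_gibbs [Nonempty A₁] (h : IsSaddle G η ρ₁ ρ₂ μ ν) (hη : 0 < η)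
    (hρ₁ : ∀ a, 0 < ρ₁ a) : μ = gibbs ρ₁ (fun a₁ => η * ∑ a₂, ν a₂ * G (a₁, a₂)) := by
  refine eq_gibbs_of_forall_regPayoff_le hρ₁ _ h.1 fun μ' hμ' => ?_
  have := h.2.2.1 μ' hμ'
  rw [J_eq_regPayoff_fst hη.ne', J_eq_regPayoff_fst hη.ne', add_le_add_iff_right] at this
  exact le_of_mul_le_mul_left this (inv_pos.2 hη)

lemma IsSaddle.snd_eq_gibbs [Nonempty A₂] (h : IsSaddle G η ρ₁ ρ₂ μ ν) (hη : 0 < η)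
    (hρ₂ : ∀ a, 0 < ρ₂ a) : ν = gibbs ρ₂ (fun a₂ => -(η * ∑ a₁, μ a₁ * G (a₁, a₂))) := by
  refine eq_gibbs_of_forall_regPayoff_le hρ₂ _ h.2.1 fun ν' hν' => ?_
  have := h.2.2.2 ν' hν'
  rw [J_eq_regPayoff_snd hη.ne', J_eq_regPayoff_snd hη.ne', sub_le_sub_iff_right,
    neg_le_neg_iff] at this
  exact le_of_mul_le_mul_left this (inv_pos.2 hη)

lemma IsSaddle.fst_pos [Nonempty A₁] (h : IsSaddle G η ρ₁ ρ₂ μ ν) (hη : 0 < η)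
    (hρ₁ : ∀ a, 0 < ρ₁ a) (a : A₁) : 0 < μ a := by
  rw [h.fst_eq_gibbs hη hρ₁]
  exact gibbs_pos hρ₁ _ a

lemma IsSaddle.snd_pos [Nonempty A₂] (h : IsSaddle G η ρ₁ ρ₂ μ ν) (hη : 0 < η)
    (hρ₂ : ∀ a, 0 < ρ₂ a) (a : A₂) : 0 < ν a := by
  rw [h.snd_eq_gibbs hη hρ₂]
  exact gibbs_pos hρ₂ _ a

lemma IsSaddle.KLdiv_add_KLdiv_eq [Nonempty A₁] [Nonempty A₂] {G' : A₁ × A₂ → ℝ}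
    {μ' : A₁ → ℝ} {ν' : A₂ → ℝ} (h : IsSaddle G η ρ₁ ρ₂ μ ν) (h' : IsSaddle G' η ρ₁ ρ₂ μ' ν')
    (hη : 0 < η) (hρ₁ : ∀ a, 0 < ρ₁ a) (hρ₂ : ∀ a, 0 < ρ₂ a) :
    (KLdiv μ μ' + KLdiv μ' μ) + (KLdiv ν ν' + KLdiv ν' ν)
      = η * (∑ a₁, (μ a₁ - μ' a₁) * ∑ a₂, ν' a₂ * (G (a₁, a₂) - G' (a₁, a₂))
        - ∑ a₂, (ν a₂ - ν' a₂) * ∑ a₁, μ' a₁ * (G (a₁, a₂) - G' (a₁, a₂))) := by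
  have hμ := KLdiv_add_KLdiv_gibbs hρ₁ (fun a₁ => η * ∑ a₂, ν a₂ * G (a₁, a₂))
    (fun a₁ => η * ∑ a₂, ν' a₂ * G' (a₁, a₂))
  have hν := KLdiv_add_KLdiv_gibbs hρ₂ (fun a₂ => -(η * ∑ a₁, μ a₁ * G (a₁, a₂)))
    (fun a₂ => -(η * ∑ a₁, μ' a₁ * G' (a₁, a₂)))
  rw [← h.fst_eq_gibbs hη hρ₁, ← h'.fst_eq_gibbs hη hρ₁] at hμ
  rw [← h.snd_eq_gibbs hη hρ₂, ← h'.snd_eq_gibbs hη hρ₂] at hν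
  rw [hμ, hν]
  simp only [Finset.mul_sum, ← Finset.sum_sub_distrib, ← Finset.sum_neg_distrib]
  rw [Finset.sum_comm (s := (Finset.univ : Finset A₂)),
    Finset.sum_comm (s := (Finset.univ : Finset A₂)), ← Finset.sum_add_distrib,
    ← Finset.sum_sub_distrib, Finset.mul_sum]
  refine Finset.sum_congr rfl fun a₁ _ => ?_
  rw [← Finset.sum_add_distrib, ← Finset.sum_sub_distrib, Finset.mul_sum]
  exact Finset.sum_congr rfl fun a₂ _ => by ring

end Game

lemma add_sq_le_four_mul_sq {a b c : ℝ} (h : a ^ 2 + b ^ 2 ≤ c * (a + b)) :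
    (a + b) ^ 2 ≤ 4 * c ^ 2 := by
  nlinarith [sq_nonneg (a - b), sq_nonneg (a + b - 2 * c)]

section Averages
variable {A : Type*} [Fintype A]

lemma sq_sum_mul_le_sum_mul_sq {w : A → ℝ} (hw : IsSimplex w) (x : A → ℝ) :
    (∑ a, w a * x a) ^ 2 ≤ ∑ a, w a * x a ^ 2 := by
  simpa [hw.2] using Finset.sum_sq_le_sum_mul_sum_of_sq_le_mul Finset.univ (fun a _ => hw.1 a)
    (fun a _ => mul_nonneg (hw.1 a) (sq_nonneg (x a))) (fun a _ => le_of_eq (by ring))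

lemma abs_sum_mul_le_sum_abs_mul {f g : A → ℝ} {M : ℝ} (hg : ∀ a, |g a| ≤ M) :
    |∑ a, f a * g a| ≤ (∑ a, |f a|) * M :=
  calc |∑ a, f a * g a| ≤ ∑ a, |f a| * |g a| := by
        simpa only [abs_mul] using Finset.abs_sum_le_sum_abs (fun a => f a * g a) Finset.univ
    _ ≤ ∑ a, |f a| * M :=
        Finset.sum_le_sum fun a _ => mul_le_mul_of_nonneg_left (hg a) (abs_nonneg _)
    _ = (∑ a, |f a|) * M := (Finset.sum_mul ..).symm

end Averages

theorem stmt9_general {A₁ A₂ : Type*} [Fintype A₁] [Fintype A₂] [Nonempty A₁] [Nonempty A₂]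
    (Ghat Gstar : A₁ × A₂ → ℝ) (η : ℝ) (hη : 0 < η)
    (π₁ref : A₁ → ℝ) (π₂ref : A₂ → ℝ)
    (h₁pos : ∀ a, 0 < π₁ref a) (h₂pos : ∀ a, 0 < π₂ref a)
    (μhat : A₁ → ℝ) (νhat : A₂ → ℝ) (μs : A₁ → ℝ) (νs : A₂ → ℝ)
    (hhat : IsSaddle Ghat η π₁ref π₂ref μhat νhat)
    (hstar : IsSaddle Gstar η π₁ref π₂ref μs νs) :
    ((∑ a₁, |μhat a₁ - μs a₁|) + (∑ a₂, |νhat a₂ - νs a₂|))^2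
      ≤ 4 * η^2 * max
        (Finset.univ.sup' Finset.univ_nonempty
          (fun a₁ => ∑ a₂, νs a₂ * (Ghat (a₁, a₂) - Gstar (a₁, a₂))^2))
        (Finset.univ.sup' Finset.univ_nonempty
          (fun a₂ => ∑ a₁, μs a₁ * (Ghat (a₁, a₂) - Gstar (a₁, a₂))^2)) := by
  set X := max (Finset.univ.sup' Finset.univ_nonempty
      (fun a₁ => ∑ a₂, νs a₂ * (Ghat (a₁, a₂) - Gstar (a₁, a₂))^2))
    (Finset.univ.sup' Finset.univ_nonempty
      (fun a₂ => ∑ a₁, μs a₁ * (Ghat (a₁, a₂) - Gstar (a₁, a₂))^2))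
  have hrow (a₁ : A₁) : ∑ a₂, νs a₂ * (Ghat (a₁, a₂) - Gstar (a₁, a₂))^2 ≤ X :=
    le_max_of_le_left (Finset.le_sup'_of_le _ (Finset.mem_univ a₁) le_rfl)
  have hcol (a₂ : A₂) : ∑ a₁, μs a₁ * (Ghat (a₁, a₂) - Gstar (a₁, a₂))^2 ≤ X :=
    le_max_of_le_right (Finset.le_sup'_of_le _ (Finset.mem_univ a₂) le_rfl)
  have hX : 0 ≤ X := (hrow (Classical.arbitrary A₁)).trans' <|
    Finset.sum_nonneg fun a₂ _ => mul_nonneg (hstar.2.1.1 a₂) (sq_nonneg _)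
  have hP := abs_sum_mul_le_sum_abs_mul (f := fun a₁ => μhat a₁ - μs a₁)
    fun a₁ => abs_le_sqrt ((sq_sum_mul_le_sum_mul_sq hstar.2.1 _).trans (hrow a₁))
  have hQ := abs_sum_mul_le_sum_abs_mul (f := fun a₂ => νhat a₂ - νs a₂)
    fun a₂ => abs_le_sqrt ((sq_sum_mul_le_sum_mul_sq hstar.1 _).trans (hcol a₂))
  have hμ := sq_sum_abs_sub_le_KLdiv_add_KLdiv (hhat.fst_pos hη h₁pos) (hstar.fst_pos hη h₁pos)
    hhat.1.2 hstar.1.2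
  have hν := sq_sum_abs_sub_le_KLdiv_add_KLdiv (hhat.snd_pos hη h₂pos) (hstar.snd_pos hη h₂pos)
    hhat.2.1.2 hstar.2.1.2
  have hsum : (∑ a₁, |μhat a₁ - μs a₁|) ^ 2 + (∑ a₂, |νhat a₂ - νs a₂|) ^ 2
      ≤ η * √X * ((∑ a₁, |μhat a₁ - μs a₁|) + (∑ a₂, |νhat a₂ - νs a₂|)) :=
    calc _ ≤ _ := add_le_add hμ hν
      _ = _ := hhat.KLdiv_add_KLdiv_eq hstar hη h₁pos h₂pos
      _ ≤ η * ((∑ a₁, |μhat a₁ - μs a₁|) * √X + (∑ a₂, |νhat a₂ - νs a₂|) * √X) :=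
        mul_le_mul_of_nonneg_left ((le_abs_self _).trans ((abs_sub _ _).trans (add_le_add hP hQ)))
          hη.le
      _ = _ := by ring
  calc _ ≤ 4 * (η * √X) ^ 2 := add_sq_le_four_mul_sq hsum
    _ = 4 * η ^ 2 * X := by rw [mul_pow, sq_sqrt hX, mul_assoc]

/-- squared ℓ1 stability of regularized saddle points via the
single-player Nash-averaged squared payoff error `ξ²`. -/
theorem stmt9 {A₁ A₂ : Type*} [Fintype A₁] [Fintype A₂] [Nonempty A₁] [Nonempty A₂]
    (Ghat Gstar : A₁ × A₂ → ℝ) (η : ℝ) (hη : 0 < η)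
    (π₁ref : A₁ → ℝ) (π₂ref : A₂ → ℝ)
    (h₁ : IsSimplex π₁ref) (h₂ : IsSimplex π₂ref)
    (h₁pos : ∀ a, 0 < π₁ref a) (h₂pos : ∀ a, 0 < π₂ref a)
    (μhat : A₁ → ℝ) (νhat : A₂ → ℝ) (μs : A₁ → ℝ) (νs : A₂ → ℝ)
    (hhat : IsSaddle Ghat η π₁ref π₂ref μhat νhat)
    (hstar : IsSaddle Gstar η π₁ref π₂ref μs νs) :
    ((∑ a₁, |μhat a₁ - μs a₁|) + (∑ a₂, |νhat a₂ - νs a₂|))^2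
      ≤ 4 * η^2 * max
        (Finset.univ.sup' Finset.univ_nonempty
          (fun a₁ => ∑ a₂, νs a₂ * (Ghat (a₁, a₂) - Gstar (a₁, a₂))^2))
        (Finset.univ.sup' Finset.univ_nonempty
          (fun a₂ => ∑ a₁, μs a₁ * (Ghat (a₁, a₂) - Gstar (a₁, a₂))^2)) :=
  stmt9_general Ghat Gstar η hη π₁ref π₂ref h₁pos h₂pos μhat νhat μs νs hhat hstar
end

section
/- Let A₁, A₂ be finite nonempty sets, let Ĝ, G* : A₁ × A₂ → ℝ, let η > 0, and let π₁ʳᵉᶠ ∈ Δ(A₁), π₂ʳᵉᶠ ∈ Δ(A₂) be strictly positive. Let (μ̂, ν̂) be a saddle point of J_Ĝ with value V̂ = J_Ĝ(μ̂, ν̂), and let (μ*, ν*) be a saddle point of J_{G*} with value V* = J_{G*}(μ*, ν*). Then (V̂ − V*)² ≤ max( Σ_{a₁,a₂} μ*(a₁)ν̂(a₂)·(Ĝ(a₁,a₂) − G*(a₁,a₂))² , Σ_{a₁,a₂} μ̂(a₁)ν*(a₂)·(Ĝ(a₁,a₂) − G*(a₁,a₂))² ). -/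
open Finset

private lemma jensen_sq_aux {A : Type*} [Fintype A] (p d : A → ℝ) (hp : ∀ a, 0 ≤ p a)
    (hs : ∑ a, p a = 1) : (∑ a, p a * d a)^2 ≤ ∑ a, p a * (d a)^2 := by
  have h := Finset.sum_mul_sq_le_sq_mul_sq Finset.univ
    (fun a => Real.sqrt (p a)) (fun a => Real.sqrt (p a) * d a)
  simp only [← mul_assoc, Real.mul_self_sqrt (hp _), mul_pow,
    Real.sq_sqrt (hp _)] at h
  calc (∑ a, p a * d a)^2 ≤ (∑ a, p a) * ∑ a, p a * d a ^ 2 := h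
    _ = ∑ a, p a * d a ^ 2 := by rw [hs, one_mul]

private lemma jensen_sq2 {A₁ A₂ : Type*} [Fintype A₁] [Fintype A₂]
    (μ : A₁ → ℝ) (ν : A₂ → ℝ) (G G' : A₁ × A₂ → ℝ)
    (hμ : IsSimplex μ) (hν : IsSimplex ν) :
    (∑ a₁, ∑ a₂, μ a₁ * ν a₂ * (G (a₁, a₂) - G' (a₁, a₂)))^2
      ≤ ∑ a₁, ∑ a₂, μ a₁ * ν a₂ * (G (a₁, a₂) - G' (a₁, a₂))^2 := by
  have h := jensen_sq_aux (A := A₁ × A₂) (fun a => μ a.1 * ν a.2)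
    (fun a => G a - G' a) (fun a => mul_nonneg (hμ.1 _) (hν.1 _)) ?_
  · simpa [Fintype.sum_prod_type] using h
  · rw [Fintype.sum_prod_type]
    simp [← Finset.mul_sum, ← Finset.sum_mul, hμ.2, hν.2]

private lemma J_sub {A₁ A₂ : Type*} [Fintype A₁] [Fintype A₂]
    (G G' : A₁ × A₂ → ℝ) (η : ℝ) (π₁ref : A₁ → ℝ) (π₂ref : A₂ → ℝ)
    (μ : A₁ → ℝ) (ν : A₂ → ℝ) :
    J G η π₁ref π₂ref μ ν - J G' η π₁ref π₂ref μ ν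
      = ∑ a₁, ∑ a₂, μ a₁ * ν a₂ * (G (a₁, a₂) - G' (a₁, a₂)) := by
  simp only [J, mul_sub, Finset.sum_sub_distrib]
  ring

/-- squared saddle-point value comparison bound. -/
theorem stmt11 {A₁ A₂ : Type*} [Fintype A₁] [Fintype A₂] [Nonempty A₁] [Nonempty A₂]
    (Ghat Gstar : A₁ × A₂ → ℝ) (η : ℝ) (hη : 0 < η)
    (π₁ref : A₁ → ℝ) (π₂ref : A₂ → ℝ)
    (h₁ : IsSimplex π₁ref) (h₂ : IsSimplex π₂ref)
    (h₁pos : ∀ a, 0 < π₁ref a) (h₂pos : ∀ a, 0 < π₂ref a)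
    (μhat : A₁ → ℝ) (νhat : A₂ → ℝ) (μs : A₁ → ℝ) (νs : A₂ → ℝ)
    (hhat : IsSaddle Ghat η π₁ref π₂ref μhat νhat)
    (hstar : IsSaddle Gstar η π₁ref π₂ref μs νs) :
    (J Ghat η π₁ref π₂ref μhat νhat - J Gstar η π₁ref π₂ref μs νs)^2
      ≤ max
        (∑ a₁, ∑ a₂, μs a₁ * νhat a₂ * (Ghat (a₁, a₂) - Gstar (a₁, a₂))^2)
        (∑ a₁, ∑ a₂, μhat a₁ * νs a₂ * (Ghat (a₁, a₂) - Gstar (a₁, a₂))^2) := by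
  set D := J Ghat η π₁ref π₂ref μhat νhat - J Gstar η π₁ref π₂ref μs νs with hD
  set L := ∑ a₁, ∑ a₂, μs a₁ * νhat a₂ * (Ghat (a₁, a₂) - Gstar (a₁, a₂)) with hLdef
  set U := ∑ a₁, ∑ a₂, μhat a₁ * νs a₂ * (Ghat (a₁, a₂) - Gstar (a₁, a₂)) with hUdef
  have hL : L ≤ D := by
    have h1 : J Ghat η π₁ref π₂ref μs νhat ≤ J Ghat η π₁ref π₂ref μhat νhat :=
      hhat.2.2.1 μs hstar.1
    have h2 : J Gstar η π₁ref π₂ref μs νs ≤ J Gstar η π₁ref π₂ref μs νhat :=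
      hstar.2.2.2 νhat hhat.2.1
    calc L = J Ghat η π₁ref π₂ref μs νhat - J Gstar η π₁ref π₂ref μs νhat :=
          (J_sub Ghat Gstar η π₁ref π₂ref μs νhat).symm
      _ ≤ D := by rw [hD]; linarith
  have hU : D ≤ U := by
    have h1 : J Ghat η π₁ref π₂ref μhat νhat ≤ J Ghat η π₁ref π₂ref μhat νs :=
      hhat.2.2.2 νs hstar.2.1
    have h2 : J Gstar η π₁ref π₂ref μhat νs ≤ J Gstar η π₁ref π₂ref μs νs :=
      hstar.2.2.1 μhat hhat.1
    calc D ≤ J Ghat η π₁ref π₂ref μhat νs - J Gstar η π₁ref π₂ref μhat νs := by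
          rw [hD]; linarith
      _ = U := J_sub Ghat Gstar η π₁ref π₂ref μhat νs
  have hLsq : L^2 ≤ ∑ a₁, ∑ a₂, μs a₁ * νhat a₂ * (Ghat (a₁, a₂) - Gstar (a₁, a₂))^2 :=
    jensen_sq2 μs νhat Ghat Gstar hstar.1 hhat.2.1
  have hUsq : U^2 ≤ ∑ a₁, ∑ a₂, μhat a₁ * νs a₂ * (Ghat (a₁, a₂) - Gstar (a₁, a₂))^2 :=
    jensen_sq2 μhat νs Ghat Gstar hhat.1 hstar.2.1
  rcases le_total D 0 with hd | hd
  · refine le_max_of_le_left ?_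
    have : D^2 ≤ L^2 := by nlinarith
    linarith
  · refine le_max_of_le_right ?_
    have : D^2 ≤ U^2 := by nlinarith
    linarith
end
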